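/- Let G = (V, E) be a finite directed graph with |V| ≥ 2 and v_init ∈ V. Define the MDP M with states S = V ∪ {s₀, s_⊥, s_a, s_b} ∪ {u₁,…,u_{|V|−1}} (all fresh) and actions Act = E ∪ {τ}, and transitions: P(s₀,τ,v_init) = P(s₀,τ,u₁) = 1/2; P(uᵢ,τ,u_{i+1}) = P(uᵢ,τ,s_⊥) = 1/2 for 1 ≤ i ≤ |V|−2; P(u_{|V|−1},τ,s_b) = P(u_{|V|−1},τ,s_⊥) = 1/2; for every edge (v,v') ∈ E, P(v,(v,v'),v') = P(v,(v,v'),s_⊥) = 1/2; P(v,τ,s_a) = 1 for every v ∈ V; P(s_⊥,τ,s_⊥) = P(s_a,τ,s_a) = P(s_b,τ,s_b) = 1; and all other transition probabilities are 0. Then for every rational ε with 0 ≤ ε < 2^{−(|V|+1)}: G contains a Hamiltonian path starting at v_init (a directed path starting at v_init that visits every vertex of V exactly once) if and only if there exists a memoryless deterministic scheduler σ for M with |Pr^{M,σ}_{s₀}(◇{s_a}) − Pr^{M,σ}_{s₀}(◇{s_b})| ≤ ε. -/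

import Mathlib

open scoped Classical
open Filter

noncomputable section

/-- A Markov decision process with state space `S` and action space `A`. -/
structure MDP (S A : Type) where
  P : S → A → S → ℝ
  nonneg : ∀ s a s', 0 ≤ P s a s'
  le_one : ∀ s a s', P s a s' ≤ 1
  exists_enabled : ∀ s : S, ∃ a : A, (∑' s', P s a s') = 1
  zero_of_not_enabled : ∀ (s : S) (a : A), (∑' s', P s a s') ≠ 1 → (∑' s', P s a s') = 0

namespace MDP

variable {S A : Type}

/-- Action `a` is enabled in state `s`. -/
def Enabled (M : MDP S A) (s : S) (a : A) : Prop := (∑' s', M.P s a s') = 1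

/-- `s` is an absorbing state. -/
def AbsorbingState (M : MDP S A) (s : S) : Prop := ∀ a : A, M.Enabled s a → M.P s a s = 1

/-- An absorbing set of states: all its elements are absorbing. -/
def AbsorbingSet (M : MDP S A) (T : Set S) : Prop := ∀ s ∈ T, M.AbsorbingState s

end MDP

/-- A finite path: an initial state together with a list of (action, next state) steps. -/
abbrev FPath (S A : Type) : Type := S × List (A × S)

/-- The last state of a finite path. -/
def fpLast {S A : Type} (p : FPath S A) : S := ((p.2.map Prod.snd).getLast?).getD p.1

/-- Extending a finite path by one step. -/
def fpExt {S A : Type} (p : FPath S A) (a : A) (s' : S) : FPath S A := (p.1, p.2 ++ [(a, s')])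

/-- A (history-dependent, randomized) scheduler for the MDP `M`. -/
structure Scheduler {S A : Type} (M : MDP S A) where
  act : FPath S A → A → ℝ
  nonneg : ∀ p a, 0 ≤ act p a
  sum_one : ∀ p, (∑' a, act p a) = 1
  not_enabled : ∀ p a, ¬ M.Enabled (fpLast p) a → act p a = 0

namespace Scheduler

variable {S A : Type} {M : MDP S A}

/-- A memoryless scheduler depends only on the last state of the path. -/
def Memoryless (σ : Scheduler M) : Prop :=
  ∀ p : FPath S A, σ.act p = σ.act (fpLast p, ([] : List (A × S)))

/-- A deterministic scheduler chooses a Dirac distribution on every path. -/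
def Deterministic (σ : Scheduler M) : Prop := ∀ p : FPath S A, ∃ a : A, σ.act p a = 1

/-- A memoryless deterministic (MD) scheduler. -/
def MD (σ : Scheduler M) : Prop := σ.Memoryless ∧ σ.Deterministic

end Scheduler

/-- One-step expectation operator: expected value of `g` after one step from `p`. -/
def stepExp {S A : Type} (M : MDP S A) (σ : Scheduler M) (p : FPath S A)
    (g : FPath S A → ℝ) : ℝ :=
  ∑' a : A, ∑' s' : S, σ.act p a * M.P (fpLast p) a s' * g (fpExt p a s')

/-- Probability of visiting `T` within `n` further steps, continuing the finite path `p`. -/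
def reachN {S A : Type} (M : MDP S A) (σ : Scheduler M) (T : Set S) :
    ℕ → FPath S A → ℝ
  | 0, p => if fpLast p ∈ T then 1 else 0
  | n + 1, p => if fpLast p ∈ T then 1 else stepExp M σ p (reachN M σ T n)

/-- Reachability probability `Pr^{M,σ}_s(◇T)`. -/
def reachProb {S A : Type} (M : MDP S A) (σ : Scheduler M) (s : S) (T : Set S) : ℝ :=
  ⨆ n : ℕ, reachN M σ T n (s, [])

/-- Probability of visiting `T` at some time `≥ j` within `j + n` steps, from path `p`. -/
def reachAfterN {S A : Type} (M : MDP S A) (σ : Scheduler M) (T : Set S) :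
    ℕ → ℕ → FPath S A → ℝ
  | 0, n, p => reachN M σ T n p
  | j + 1, n, p => stepExp M σ p (fun p' => reachAfterN M σ T j n p')

/-- Büchi probability `Pr^{M,σ}_s(□◇T)`: the probability of visiting `T` infinitely often. -/
def buchiProb {S A : Type} (M : MDP S A) (σ : Scheduler M) (s : S) (T : Set S) : ℝ :=
  ⨅ j : ℕ, ⨆ n : ℕ, reachAfterN M σ T j n (s, [])

/-- Expected sum of the rewards of the first `n+1` states (counting the current one). -/
def expRewN {S A : Type} (M : MDP S A) (σ : Scheduler M) (R : S → ℝ) :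
    ℕ → FPath S A → ℝ
  | 0, p => R (fpLast p)
  | n + 1, p => R (fpLast p) + stepExp M σ p (fun p' => expRewN M σ R n p')

/-- Expected total reward `E^{M,σ}_s(R)`. -/
def expTotalReward {S A : Type} (M : MDP S A) (σ : Scheduler M) (R : S → ℝ) (s : S) : ℝ :=
  limUnder atTop (fun n => expRewN M σ R n (s, []))

end

/-- The fresh extra states `s₀`, `s_⊥`, `s_a`, `s_b` of the Hamiltonian-path MDP. -/
inductive HX : Type where
  | s0 : HX
  | bot : HX
  | sa : HX
  | sb : HX
deriving DecidableEq

/-- States of the Hamiltonian-path MDP: vertices, the fresh states, and `u₁, …, u_{N-1}`. -/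
abbrev HSt (V : Type) (N : ℕ) : Type := V ⊕ (HX ⊕ Fin (N - 1))

/-- Actions of the Hamiltonian-path MDP: edges of the graph, and the fresh action `τ`. -/
abbrev HAct (V : Type) (E : Set (V × V)) : Type := {e : V × V // e ∈ E} ⊕ Unit

def hs0 {V : Type} {N : ℕ} : HSt V N := Sum.inr (Sum.inl HX.s0)
def hbot {V : Type} {N : ℕ} : HSt V N := Sum.inr (Sum.inl HX.bot)
def hsa {V : Type} {N : ℕ} : HSt V N := Sum.inr (Sum.inl HX.sa)
def hsb {V : Type} {N : ℕ} : HSt V N := Sum.inr (Sum.inl HX.sb)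
def hu {V : Type} {N : ℕ} (i : Fin (N - 1)) : HSt V N := Sum.inr (Sum.inr i)
def hv {V : Type} {N : ℕ} (v : V) : HSt V N := Sum.inl v
def hτ {V : Type} {E : Set (V × V)} : HAct V E := Sum.inr ()

/-- The MDP constructed from the graph `(V, E)` with initial vertex `vinit`, where `N = |V|`. -/
def IsHamiltonMDP {V : Type} (N : ℕ) (E : Set (V × V)) (vinit : V)
    (M : MDP (HSt V N) (HAct V E)) : Prop :=
  M.P hs0 hτ (hv vinit) = 1/2 ∧
  (∀ h1 : 0 < N - 1, M.P hs0 hτ (hu ⟨0, h1⟩) = 1/2) ∧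
  (∀ i : Fin (N - 1), ∀ h : i.1 + 1 < N - 1, M.P (hu i) hτ (hu ⟨i.1 + 1, h⟩) = 1/2) ∧
  (∀ i : Fin (N - 1), i.1 + 1 = N - 1 → M.P (hu i) hτ hsb = 1/2) ∧
  (∀ i : Fin (N - 1), M.P (hu i) hτ hbot = 1/2) ∧
  (∀ e : {e : V × V // e ∈ E},
      M.P (hv e.1.1) (Sum.inl e) (hv e.1.2) = 1/2 ∧ M.P (hv e.1.1) (Sum.inl e) hbot = 1/2) ∧
  (∀ v : V, M.P (hv v) hτ hsa = 1) ∧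
  M.P hbot hτ hbot = 1 ∧ M.P hsa hτ hsa = 1 ∧ M.P hsb hτ hsb = 1 ∧
  (∀ (x : HSt V N) (a : HAct V E) (y : HSt V N), M.P x a y ≠ 0 →
    (x = hs0 ∧ a = hτ ∧ (y = hv vinit ∨ ∃ h1 : 0 < N - 1, y = hu ⟨0, h1⟩)) ∨
    (∃ i : Fin (N - 1), x = hu i ∧ a = hτ ∧
        (y = hbot ∨ (∃ h : i.1 + 1 < N - 1, y = hu ⟨i.1 + 1, h⟩) ∨ (i.1 + 1 = N - 1 ∧ y = hsb))) ∨
    (∃ e : {e : V × V // e ∈ E}, x = hv e.1.1 ∧ a = Sum.inl e ∧ (y = hv e.1.2 ∨ y = hbot)) ∨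
    (∃ v : V, x = hv v ∧ a = hτ ∧ y = hsa) ∨
    (x = hbot ∧ a = hτ ∧ y = hbot) ∨
    (x = hsa ∧ a = hτ ∧ y = hsa) ∨
    (x = hsb ∧ a = hτ ∧ y = hsb))

/-!
Under an MD scheduler the run from `s₀` reaches `s_b` exactly when it enters the counter chain
and survives its `|V| - 1` coin flips, so `Pr(◇s_b) = 2^{-|V|}` whatever the scheduler does.
On the other branch the scheduler walks from `v_init` along edges, losing half of the mass to
`s_⊥` at each edge, until it plays `τ`: if that happens after `k` edges then
`Pr(◇s_a) = 2^{-(k+1)}`, and otherwise `Pr(◇s_a) = 0`. Being memoryless, the walk cannot revisit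
a vertex before its first `τ`, so `k + 1 ≤ |V|`, and `|2^{-(k+1)} - 2^{-|V|}| < 2^{-|V|}` forces
`k + 1 = |V|`: the walk is a Hamiltonian path. Conversely, following a Hamiltonian path and
playing `τ` at its end makes both probabilities `2^{-|V|}`.
-/

open Finset Topology

theorem Function.injOn_iterate_Iic_of_first_hit {α : Type*} {f : α → α} {x : α}
    {p : α → Prop} {k : ℕ} (hk : p (f^[k] x)) (hlt : ∀ j < k, ¬ p (f^[j] x)) :
    Set.InjOn (f^[·] x) (Set.Iic k) := by
  have hne : ∀ i j, i < j → j ≤ k → f^[i] x ≠ f^[j] x := by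
    intro i j hij hjk heq
    refine hlt (k - j + i) (by omega) ?_
    rwa [Function.iterate_add_apply, heq, ← Function.iterate_add_apply, Nat.sub_add_cancel hjk]
  intro i hi j hj heq
  rcases lt_trichotomy i j with h | rfl | h
  · exact absurd heq (hne i j h hj)
  · rfl
  · exact absurd heq.symm (hne j i h hi)

theorem two_mul_half_pow_le {m n : ℕ} (h : m < n) : 2 * (1 / 2 : ℝ) ^ n ≤ (1 / 2) ^ m := by
  obtain ⟨t, rfl⟩ := Nat.exists_eq_add_of_lt h
  have ht : (1 / 2 : ℝ) ^ t ≤ 1 := pow_le_one₀ (by norm_num) (by norm_num)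
  have hm : (0 : ℝ) < (1 / 2) ^ m := by positivity
  rw [pow_succ, pow_add]
  nlinarith

namespace MDP

section Rows

variable {S A : Type} {M : MDP S A} {s : S} {a : A}

theorem sum_pair_P_eq_one {y₁ y₂ : S} (hne : y₁ ≠ y₂) (h₁ : M.P s a y₁ = 1 / 2)
    (h₂ : M.P s a y₂ = 1 / 2) : ∑ y ∈ {y₁, y₂}, M.P s a y = 1 := by
  rw [sum_pair hne, h₁, h₂]
  norm_num

variable [Fintype S] {t : Finset S}

theorem sum_P_le_one (M : MDP S A) (s : S) (a : A) : ∑ s', M.P s a s' ≤ 1 := by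
  have h := M.zero_of_not_enabled s a
  rw [tsum_fintype] at h
  by_cases h1 : ∑ s', M.P s a s' = 1
  · exact h1.le
  · rw [h h1]
    exact zero_le_one

theorem P_eq_zero_of_sum_eq_one (ht : ∑ y ∈ t, M.P s a y = 1) {y : S} (hy : y ∉ t) :
    M.P s a y = 0 := by
  have hle := M.sum_P_le_one s a
  rw [← sum_add_sum_compl t, ht] at hle
  have hcompl : ∑ y ∈ tᶜ, M.P s a y = 0 :=
    le_antisymm (by linarith) (sum_nonneg fun _ _ => M.nonneg _ _ _)
  exact (sum_eq_zero_iff_of_nonneg fun _ _ => M.nonneg _ _ _).1 hcompl y (mem_compl.2 hy)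

theorem mem_of_P_ne_zero (ht : ∑ y ∈ t, M.P s a y = 1) {y : S} (hy : M.P s a y ≠ 0) :
    y ∈ t :=
  not_imp_comm.1 (P_eq_zero_of_sum_eq_one ht) hy

theorem sum_P_mul_eq_of_sum_eq_one (ht : ∑ y ∈ t, M.P s a y = 1) (f : S → ℝ) :
    ∑ y, M.P s a y * f y = ∑ y ∈ t, M.P s a y * f y :=
  (sum_subset (subset_univ t) fun y _ hy => by
    rw [P_eq_zero_of_sum_eq_one ht hy, zero_mul]).symm

theorem enabled_of_sum_eq_one (ht : ∑ y ∈ t, M.P s a y = 1) : M.Enabled s a := by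
  have h := sum_P_mul_eq_of_sum_eq_one ht 1
  simp only [Pi.one_apply, mul_one] at h
  rw [Enabled, tsum_fintype, h, ht]

theorem enabled_of_halves {y₁ y₂ : S} (hne : y₁ ≠ y₂) (h₁ : M.P s a y₁ = 1 / 2)
    (h₂ : M.P s a y₂ = 1 / 2) : M.Enabled s a :=
  enabled_of_sum_eq_one (sum_pair_P_eq_one hne h₁ h₂)

theorem enabled_of_eq_one {y₁ : S} (h₁ : M.P s a y₁ = 1) : M.Enabled s a :=
  enabled_of_sum_eq_one (t := {y₁}) (by rwa [sum_singleton])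

theorem sum_P_mul_of_halves {y₁ y₂ : S} (hne : y₁ ≠ y₂) (h₁ : M.P s a y₁ = 1 / 2)
    (h₂ : M.P s a y₂ = 1 / 2) (f : S → ℝ) :
    ∑ y, M.P s a y * f y = (f y₁ + f y₂) / 2 := by
  rw [sum_P_mul_eq_of_sum_eq_one (sum_pair_P_eq_one hne h₁ h₂), sum_pair hne, h₁, h₂]
  ring

theorem sum_P_mul_of_eq_one {y₁ : S} (h₁ : M.P s a y₁ = 1) (f : S → ℝ) :
    ∑ y, M.P s a y * f y = f y₁ := by
  rw [sum_P_mul_eq_of_sum_eq_one (t := {y₁}) (by rwa [sum_singleton]), sum_singleton, h₁,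
    one_mul]

end Rows

section Reachability

variable {S A : Type} [Fintype S] (M : MDP S A) (d : S → A) (T : Set S)

noncomputable def reachWithin : ℕ → S → ℝ
  | 0, s => if s ∈ T then 1 else 0
  | n + 1, s => if s ∈ T then 1 else ∑ s', M.P s (d s) s' * reachWithin n s'

noncomputable def reachLim (s : S) : ℝ := ⨆ n, M.reachWithin d T n s

variable {M d T}

theorem reachWithin_mem_Icc (n : ℕ) (s : S) : M.reachWithin d T n s ∈ Set.Icc 0 1 := by
  induction n generalizing s with
  | zero => unfold reachWithin; split_ifs <;> norm_num
  | succ n ih =>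
    unfold reachWithin
    split_ifs
    · norm_num
    · refine ⟨sum_nonneg fun s' _ => mul_nonneg (M.nonneg _ _ _) (ih s').1, ?_⟩
      calc ∑ s', M.P s (d s) s' * M.reachWithin d T n s'
          ≤ ∑ s', M.P s (d s) s' :=
            sum_le_sum fun s' _ => mul_le_of_le_one_right (M.nonneg _ _ _) (ih s').2
        _ ≤ 1 := M.sum_P_le_one s (d s)

theorem reachWithin_succ_le (n : ℕ) (s : S) :
    M.reachWithin d T n s ≤ M.reachWithin d T (n + 1) s := by
  induction n generalizing s with
  | zero =>
    simp only [reachWithin]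
    split_ifs
    · rfl
    · exact sum_nonneg fun s' _ =>
        mul_nonneg (M.nonneg _ _ _) (reachWithin_mem_Icc (M := M) (d := d) 0 s').1
  | succ n ih =>
    rw [reachWithin, reachWithin]
    split_ifs
    · rfl
    · exact sum_le_sum fun s' _ => mul_le_mul_of_nonneg_left (ih s') (M.nonneg _ _ _)

theorem tendsto_reachWithin (s : S) :
    Filter.Tendsto (M.reachWithin d T · s) Filter.atTop (𝓝 (M.reachLim d T s)) :=
  tendsto_atTop_ciSup (monotone_nat_of_le_succ fun n => reachWithin_succ_le n s)
    ⟨1, Set.forall_mem_range.2 fun n => (reachWithin_mem_Icc n s).2⟩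

theorem reachLim_of_mem {s : S} (hs : s ∈ T) : M.reachLim d T s = 1 := by
  have h : ∀ n, M.reachWithin d T n s = 1 := by
    rintro (_ | _) <;> simp [reachWithin, hs]
  simp [reachLim, h]

theorem reachLim_of_not_mem {s : S} (hs : s ∉ T) :
    M.reachLim d T s = ∑ s', M.P s (d s) s' * M.reachLim d T s' := by
  refine tendsto_nhds_unique ((tendsto_reachWithin s).comp (Filter.tendsto_add_atTop_nat 1)) ?_
  simp only [Function.comp_def, reachWithin, hs, if_false]
  exact tendsto_finsetSum _ fun s' _ => (tendsto_reachWithin s').const_mul _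

theorem reachLim_eq_zero_of_closed {C : Set S} (hCT : Disjoint C T)
    (hC : ∀ s ∈ C, ∀ s', M.P s (d s) s' ≠ 0 → s' ∈ C) {s : S} (hs : s ∈ C) :
    M.reachLim d T s = 0 := by
  have h : ∀ n, ∀ s ∈ C, M.reachWithin d T n s = 0 := by
    intro n
    induction n with
    | zero => intro s hs; simp [reachWithin, hCT.notMem_of_mem_left hs]
    | succ n ih =>
      intro s hs
      rw [reachWithin, if_neg (hCT.notMem_of_mem_left hs)]
      refine sum_eq_zero fun s' _ => ?_
      by_cases hP : M.P s (d s) s' = 0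
      · rw [hP, zero_mul]
      · rw [ih s' (hC s hs s' hP), mul_zero]
  simp [reachLim, h _ s hs]

theorem reachLim_of_halves {s y₁ y₂ : S} (hs : s ∉ T) (hne : y₁ ≠ y₂)
    (h₁ : M.P s (d s) y₁ = 1 / 2) (h₂ : M.P s (d s) y₂ = 1 / 2) :
    M.reachLim d T s = (M.reachLim d T y₁ + M.reachLim d T y₂) / 2 := by
  rw [reachLim_of_not_mem hs, sum_P_mul_of_halves hne h₁ h₂]

theorem reachLim_of_eq_one {s y : S} (hs : s ∉ T) (h : M.P s (d s) y = 1) :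
    M.reachLim d T s = M.reachLim d T y := by
  rw [reachLim_of_not_mem hs, sum_P_mul_of_eq_one h]

end Reachability

end MDP

namespace Scheduler

variable {S A : Type} [Fintype A] {M : MDP S A}

noncomputable def ofDecision (d : S → A) (hd : ∀ s, M.Enabled s (d s)) : Scheduler M where
  act p a := if a = d (fpLast p) then 1 else 0
  nonneg p a := by split_ifs <;> norm_num
  sum_one p := by simp [tsum_fintype]
  not_enabled p a h := if_neg fun (ha : a = d (fpLast p)) => h (ha ▸ hd _)

theorem ofDecision_MD (d : S → A) (hd : ∀ s, M.Enabled s (d s)) : (ofDecision d hd).MD :=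
  ⟨fun _ => rfl, fun p => ⟨d (fpLast p), if_pos rfl⟩⟩

theorem act_eq_zero_of_act_eq_one {σ : Scheduler M} {p : FPath S A} {a b : A}
    (ha : σ.act p a = 1) (hba : b ≠ a) : σ.act p b = 0 := by
  have hsum := σ.sum_one p
  rw [tsum_fintype, ← add_sum_erase _ _ (mem_univ a), ha, add_eq_left] at hsum
  exact (sum_eq_zero_iff_of_nonneg fun _ _ => σ.nonneg p _).1 hsum b
    (mem_erase.2 ⟨hba, mem_univ b⟩)

theorem MD.exists_eq_ofDecision {σ : Scheduler M} (hσ : σ.MD) :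
    ∃ (d : S → A) (hd : ∀ s, M.Enabled s (d s)), σ = ofDecision d hd := by
  choose d hd using fun s : S => hσ.2 (s, [])
  have hact : ∀ p a, σ.act p a = if a = d (fpLast p) then 1 else 0 := by
    intro p a
    rw [hσ.1 p]
    split_ifs with h
    · rw [h, hd]
    · exact act_eq_zero_of_act_eq_one (hd _) h
  have hen : ∀ s, M.Enabled s (d s) := fun s => by
    by_contra h
    have := σ.not_enabled (s, []) (d s) h
    rw [hd] at this
    exact one_ne_zero this
  refine ⟨d, hen, ?_⟩
  cases σ
  simp only [ofDecision, mk.injEq]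
  exact funext₂ hact

end Scheduler

section Decision

variable {S A : Type} [Fintype S] [Fintype A] {M : MDP S A} (d : S → A)
  (hd : ∀ s, M.Enabled s (d s))

theorem stepExp_ofDecision (p : FPath S A) (g : FPath S A → ℝ) :
    stepExp M (Scheduler.ofDecision d hd) p g =
      ∑ s', M.P (fpLast p) (d (fpLast p)) s' * g (fpExt p (d (fpLast p)) s') := by
  simp [stepExp, Scheduler.ofDecision, tsum_fintype]

theorem reachN_ofDecision (T : Set S) (n : ℕ) (p : FPath S A) :
    reachN M (Scheduler.ofDecision d hd) T n p = M.reachWithin d T n (fpLast p) := by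
  induction n generalizing p with
  | zero => rfl
  | succ n ih =>
    simp only [reachN, MDP.reachWithin, stepExp_ofDecision, ih]
    simp [fpLast, fpExt]

theorem reachProb_ofDecision (s : S) (T : Set S) :
    reachProb M (Scheduler.ofDecision d hd) s T = M.reachLim d T s := by
  simp only [reachProb, reachN_ofDecision]
  rfl

end Decision

instance : Fintype HX := ⟨{.s0, .bot, .sa, .sb}, fun x => by cases x <;> simp⟩

def ChoosesEdge {V : Type} {N : ℕ} {E : Set (V × V)} (d : HSt V N → HAct V E) (v v' : V) :
    Prop :=
  ∃ h : (v, v') ∈ E, d (hv v) = Sum.inl ⟨(v, v'), h⟩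

namespace IsHamiltonMDP

variable {V : Type} {N : ℕ} {E : Set (V × V)} {vinit : V}
  {M : MDP (HSt V N) (HAct V E)} (hM : IsHamiltonMDP N E vinit M)
include hM

theorem eq_src_of_P_ne_zero {s y : HSt V N} {e : {e : V × V // e ∈ E}}
    (h : M.P s (Sum.inl e) y ≠ 0) : s = hv e.1.1 := by
  rcases hM.2.2.2.2.2.2.2.2.2.2 _ _ _ h with
    ⟨-, ha, -⟩ | ⟨-, -, ha, -⟩ | ⟨e', hs, he, -⟩ | ⟨-, -, ha, -⟩ | ⟨-, ha, -⟩ | ⟨-, ha, -⟩ |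
    ⟨-, ha, -⟩
  all_goals first
    | exact absurd ha Sum.inl_ne_inr
    | rwa [Sum.inl_injective he]

theorem closed_vertices {s y : HSt V N} {a : HAct V E} (hs : s ∈ Set.range hv ∪ {hbot, hsa})
    (h : M.P s a y ≠ 0) : y ∈ Set.range hv ∪ {hbot, hsa} := by
  rcases hM.2.2.2.2.2.2.2.2.2.2 _ _ _ h with
    ⟨rfl, -⟩ | ⟨i, rfl, -⟩ | ⟨e, -, -, rfl | rfl⟩ | ⟨v, -, -, rfl⟩ | ⟨-, -, rfl⟩ | ⟨-, -, rfl⟩ |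
    ⟨rfl, -⟩ <;>
    simp_all [hs0, hbot, hsa, hsb, hu, hv]

theorem closed_counter {s y : HSt V N} {a : HAct V E} (hs : s ∈ Set.range hu ∪ {hbot, hsb})
    (h : M.P s a y ≠ 0) : y ∈ Set.range hu ∪ {hbot, hsb} := by
  rcases hM.2.2.2.2.2.2.2.2.2.2 _ _ _ h with
    ⟨rfl, -⟩ | ⟨i, -, -, rfl | ⟨-, rfl⟩ | ⟨-, rfl⟩⟩ | ⟨e, rfl, -⟩ | ⟨v, rfl, -⟩ | ⟨-, -, rfl⟩ |
    ⟨rfl, -⟩ | ⟨-, -, rfl⟩ <;>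
    simp_all [hs0, hbot, hsa, hsb, hu, hv]

variable [Fintype V]

theorem eq_src_of_enabled {s : HSt V N} {e : {e : V × V // e ∈ E}}
    (h : M.Enabled s (Sum.inl e)) : s = hv e.1.1 := by
  rw [MDP.Enabled, tsum_fintype] at h
  obtain ⟨y, -, hy⟩ := exists_ne_zero_of_sum_ne_zero (h ▸ one_ne_zero)
  exact hM.eq_src_of_P_ne_zero hy

theorem enabled_edge (e : {e : V × V // e ∈ E}) : M.Enabled (hv e.1.1) (Sum.inl e) :=
  MDP.enabled_of_halves (by simp [hv, hbot]) (hM.2.2.2.2.2.1 e).1 (hM.2.2.2.2.2.1 e).2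

theorem enabled_tau (hN : 2 ≤ N) (s : HSt V N) : M.Enabled s hτ := by
  obtain ⟨h_s0_v, h_s0_u, h_u_u, h_u_sb, h_u_bot, -, h_v, h_bot, h_sa, h_sb, -⟩ := hM
  rcases s with v | (x | i)
  · exact MDP.enabled_of_eq_one (h_v v)
  · cases x
    · exact MDP.enabled_of_halves (by simp [hv, hu]) h_s0_v (h_s0_u (by omega))
    · exact MDP.enabled_of_eq_one h_bot
    · exact MDP.enabled_of_eq_one h_sa
    · exact MDP.enabled_of_eq_one h_sb
  · by_cases hi : i.1 + 1 < N - 1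
    · exact MDP.enabled_of_halves (by simp [hu, hbot]) (h_u_u i hi) (h_u_bot i)
    · exact MDP.enabled_of_halves (by simp [hsb, hbot]) (h_u_sb i (by omega)) (h_u_bot i)

variable {d : HSt V N → HAct V E}

theorem reachLim_sb_eq_zero {s : HSt V N} (hs : s ∈ Set.range hv ∪ {hbot, hsa}) :
    M.reachLim d {hsb} s = 0 :=
  MDP.reachLim_eq_zero_of_closed (by simp [hsa, hv, hsb, hbot])
    (fun _ hs _ => hM.closed_vertices hs) hs

theorem reachLim_sa_eq_zero {s : HSt V N} (hs : s ∈ Set.range hu ∪ {hbot, hsb}) :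
    M.reachLim d {hsa} s = 0 :=
  MDP.reachLim_eq_zero_of_closed (by simp [hsa, hu, hsb, hbot])
    (fun _ hs _ => hM.closed_counter hs) hs

variable {T : Set (HSt V N)}

theorem reachLim_hv_of_choosesEdge {v v' : V} (h : ChoosesEdge d v v') (hT : hv v ∉ T) :
    M.reachLim d T (hv v) = (M.reachLim d T (hv v') + M.reachLim d T hbot) / 2 := by
  obtain ⟨hE, hdv⟩ := h
  exact MDP.reachLim_of_halves hT (by simp [hv, hbot]) (hdv ▸ (hM.2.2.2.2.2.1 ⟨_, hE⟩).1)
    (hdv ▸ (hM.2.2.2.2.2.1 ⟨_, hE⟩).2)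

theorem reachLim_hv_of_tau {v : V} (h : d (hv v) = hτ) (hT : hv v ∉ T) :
    M.reachLim d T (hv v) = M.reachLim d T hsa :=
  MDP.reachLim_of_eq_one hT (h ▸ hM.2.2.2.2.2.2.1 v)

variable (hd : ∀ s, M.Enabled s (d s))
include hd

theorem decision_eq_tau {s : HSt V N} (hs : ∀ v, s ≠ hv v) : d s = hτ := by
  rcases h : d s with e | ⟨⟩
  · exact absurd (hM.eq_src_of_enabled (h ▸ hd s)) (hs _)
  · rfl

theorem decision_vertex (v : V) : d (hv v) = hτ ∨ ∃ v', ChoosesEdge d v v' := by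
  rcases h : d (hv v) with e | ⟨⟩
  · obtain rfl : v = e.1.1 := Sum.inl_injective (hM.eq_src_of_enabled (h ▸ hd (hv v)))
    exact Or.inr ⟨e.1.2, e.2, h⟩
  · exact Or.inl rfl

theorem reachLim_s0 (hN : 2 ≤ N) (hT : hs0 ∉ T) :
    M.reachLim d T hs0 =
      (M.reachLim d T (hv vinit) + M.reachLim d T (hu ⟨0, by omega⟩)) / 2 := by
  have hτ0 : d hs0 = hτ := hM.decision_eq_tau hd (by simp [hs0, hv])
  exact MDP.reachLim_of_halves hT (by simp [hv, hu]) (hτ0 ▸ hM.1) (hτ0 ▸ hM.2.1 (by omega))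

theorem reachLim_hu_of_lt {i : Fin (N - 1)} (hi : i.1 + 1 < N - 1) (hT : hu i ∉ T) :
    M.reachLim d T (hu i) = (M.reachLim d T (hu ⟨i.1 + 1, hi⟩) + M.reachLim d T hbot) / 2 := by
  have hτi : d (hu i) = hτ := hM.decision_eq_tau hd (by simp [hu, hv])
  exact MDP.reachLim_of_halves hT (by simp [hu, hbot]) (hτi ▸ hM.2.2.1 i hi)
    (hτi ▸ hM.2.2.2.2.1 i)

theorem reachLim_hu_of_eq {i : Fin (N - 1)} (hi : i.1 + 1 = N - 1) (hT : hu i ∉ T) :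
    M.reachLim d T (hu i) = (M.reachLim d T hsb + M.reachLim d T hbot) / 2 := by
  have hτi : d (hu i) = hτ := hM.decision_eq_tau hd (by simp [hu, hv])
  exact MDP.reachLim_of_halves hT (by simp [hsb, hbot]) (hτi ▸ hM.2.2.2.1 i hi)
    (hτi ▸ hM.2.2.2.2.1 i)

theorem reachLim_sb_s0 (hN : 2 ≤ N) : M.reachLim d {hsb} hs0 = (1 / 2) ^ N := by
  have hbot0 : M.reachLim d {hsb} hbot = 0 := hM.reachLim_sb_eq_zero (by simp)
  have hu_val (m : ℕ) : ∀ i : Fin (N - 1), i.1 + m + 1 = N - 1 →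
      M.reachLim d {hsb} (hu i) = (1 / 2) ^ (m + 1) := by
    induction m with
    | zero =>
      intro i hi
      rw [hM.reachLim_hu_of_eq hd hi (by simp [hu, hsb]),
        MDP.reachLim_of_mem (Set.mem_singleton _), hbot0]
      norm_num
    | succ m ih =>
      intro i hi
      rw [hM.reachLim_hu_of_lt hd (by omega) (by simp [hu, hsb]), ih _ (by simp only; omega),
        hbot0]
      ring
  rw [hM.reachLim_s0 hd hN (by simp [hs0, hsb]), hM.reachLim_sb_eq_zero (by simp),
    hu_val (N - 2) _ (by simp only; omega)]
  obtain ⟨n, rfl⟩ : ∃ n, N = n + 2 := ⟨N - 2, by omega⟩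
  simp only [Nat.add_sub_cancel]
  ring

theorem reachLim_sa_s0_of_stop (hN : 2 ≤ N) {w : ℕ → V} (hw0 : w 0 = vinit) {k : ℕ}
    (hstep : ∀ j < k, ChoosesEdge d (w j) (w (j + 1))) (hstop : d (hv (w k)) = hτ) :
    M.reachLim d {hsa} hs0 = (1 / 2) ^ (k + 1) := by
  have hbot0 : M.reachLim d {hsa} hbot = 0 := hM.reachLim_sa_eq_zero (by simp)
  have hw_val (m : ℕ) : ∀ j, j + m = k → M.reachLim d {hsa} (hv (w j)) = (1 / 2) ^ m := by
    induction m with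
    | zero =>
      intro j (hj : j = k)
      subst hj
      rw [hM.reachLim_hv_of_tau hstop (by simp [hv, hsa]),
        MDP.reachLim_of_mem (Set.mem_singleton _), pow_zero]
    | succ m ih =>
      intro j hj
      rw [hM.reachLim_hv_of_choosesEdge (hstep j (by omega)) (by simp [hv, hsa]),
        ih _ (by omega), hbot0]
      ring
  rw [hM.reachLim_s0 hd hN (by simp [hs0, hsa]), ← hw0, hw_val k 0 (zero_add k),
    hM.reachLim_sa_eq_zero (by simp)]
  ring

theorem reachLim_sa_s0_of_forall (hN : 2 ≤ N) {w : ℕ → V} (hw0 : w 0 = vinit)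
    (hstep : ∀ j, ChoosesEdge d (w j) (w (j + 1))) : M.reachLim d {hsa} hs0 = 0 := by
  have hτs0 : d hs0 = hτ := hM.decision_eq_tau hd (by simp [hs0, hv])
  have hcounter := @hM.closed_counter
  obtain ⟨h_s0_v, h_s0_u, -, -, -, h_edge, -⟩ := hM
  refine MDP.reachLim_eq_zero_of_closed
    (C := {hs0} ∪ Set.range (hv ∘ w) ∪ (Set.range hu ∪ {hbot, hsb}))
    (by simp [hs0, hv, hu, hbot, hsb, hsa]) ?_ (by simp)
  rintro s ((rfl | ⟨j, rfl⟩) | hs) y hy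
  · rw [hτs0] at hy
    have hy' := MDP.mem_of_P_ne_zero
      (MDP.sum_pair_P_eq_one (by simp [hv, hu]) h_s0_v (h_s0_u (by omega))) hy
    simp only [Finset.mem_insert, Finset.mem_singleton] at hy'
    rcases hy' with rfl | rfl
    · exact Or.inl (Or.inr ⟨0, by simp [hw0]⟩)
    · simp
  · obtain ⟨hE, hdj⟩ := hstep j
    rw [Function.comp_apply, hdj] at hy
    have hy' := MDP.mem_of_P_ne_zero (MDP.sum_pair_P_eq_one (by simp [hv, hbot])
      (h_edge ⟨_, hE⟩).1 (h_edge ⟨_, hE⟩).2) hy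
    simp only [Finset.mem_insert, Finset.mem_singleton] at hy'
    rcases hy' with rfl | rfl
    · exact Or.inl (Or.inr ⟨j + 1, rfl⟩)
    · simp
  · exact Or.inr (hcounter hs hy)

end IsHamiltonMDP

section Forward

variable {V : Type} {N : ℕ} {E : Set (V × V)}

/-- At `l[i]` take the edge to `l[i + 1]`; at the last vertex of `l`, and off `l`, play `τ`. -/
noncomputable def pathDecision (l : List V) : HSt V N → HAct V E
  | Sum.inl v =>
    if h : l.idxOf v + 1 < l.length ∧ (v, l.getD (l.idxOf v + 1) v) ∈ E then
      Sum.inl ⟨_, h.2⟩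
    else hτ
  | Sum.inr _ => hτ

theorem IsHamiltonMDP.enabled_pathDecision [Fintype V] {vinit : V}
    {M : MDP (HSt V N) (HAct V E)} (hM : IsHamiltonMDP N E vinit M) (hN : 2 ≤ N) (l : List V)
    (s : HSt V N) : M.Enabled s (pathDecision l s) := by
  rcases s with v | x
  · simp only [pathDecision]
    split_ifs with h
    · exact hM.enabled_edge ⟨_, h.2⟩
    · exact hM.enabled_tau hN _
  · exact hM.enabled_tau hN _

variable {l : List V} (hnd : l.Nodup)
include hnd

theorem choosesEdge_pathDecision (hch : l.IsChain fun a b => (a, b) ∈ E) {j : ℕ}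
    (hj : j + 1 < l.length) : ChoosesEdge (N := N) (pathDecision (E := E) l) l[j] l[j + 1] := by
  have hE : (l[j], l[j + 1]) ∈ E := List.isChain_iff_getElem.1 hch j hj
  have hidx : l.idxOf l[j] = j := hnd.idxOf_getElem j _
  refine ⟨hE, ?_⟩
  simp only [hv, pathDecision, hidx, List.getD_eq_getElem _ _ hj]
  exact dif_pos ⟨hj, hE⟩

theorem pathDecision_getLast (hl : l ≠ []) :
    pathDecision (N := N) (E := E) l (hv (l.getLast hl)) = hτ := by
  have hidx : l.idxOf (l.getLast hl) = l.length - 1 := by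
    rw [List.getLast_eq_getElem]
    exact hnd.idxOf_getElem _ _
  simp only [hv, pathDecision, hidx]
  rw [dif_neg]
  omega

end Forward

theorem IsHamiltonMDP.reachLim_pathDecision {V : Type} [Fintype V] {N : ℕ} {E : Set (V × V)}
    {vinit : V} {M : MDP (HSt V N) (HAct V E)} (hM : IsHamiltonMDP N E vinit M) (hN : 2 ≤ N)
    {l : List V} (hlen : l.length = N) (hnd : l.Nodup) (hhd : l.head? = some vinit)
    (hch : l.IsChain fun a b => (a, b) ∈ E) :
    M.reachLim (pathDecision l) {hsa} hs0 = M.reachLim (pathDecision l) {hsb} hs0 := by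
  have hd := hM.enabled_pathDecision hN l
  have hl : l ≠ [] := by rintro rfl; simp at hhd
  have hw (j : ℕ) (hj : j < l.length) : l.getD j vinit = l[j] := List.getD_eq_getElem _ _ hj
  have hw0 : l.getD 0 vinit = vinit := by
    obtain ⟨a, t, rfl⟩ := List.exists_cons_of_ne_nil hl
    simpa using hhd
  have hstep (j : ℕ) (hj : j < N - 1) :
      ChoosesEdge (N := N) (pathDecision (E := E) l) (l.getD j vinit) (l.getD (j + 1) vinit) := by
    rw [hw j (by omega), hw (j + 1) (by omega)]
    exact choosesEdge_pathDecision hnd hch (by omega)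
  have hstop : pathDecision (E := E) l (hv (N := N) (l.getD (N - 1) vinit)) = hτ := by
    have h := pathDecision_getLast (N := N) (E := E) hnd hl
    rwa [List.getLast_eq_getElem, ← List.getD_eq_getElem _ vinit, hlen] at h
  rw [hM.reachLim_sb_s0 hd hN, hM.reachLim_sa_s0_of_stop hd hN hw0 hstep hstop,
    Nat.sub_add_cancel (by omega)]

section Backward

variable {V : Type} {N : ℕ} {E : Set (V × V)}

noncomputable def nextVertex (d : HSt V N → HAct V E) (v : V) : V :=
  match d (hv v) with
  | Sum.inl e => e.1.2
  | Sum.inr _ => v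

variable [Fintype V] {vinit : V} {M : MDP (HSt V N) (HAct V E)} (hM : IsHamiltonMDP N E vinit M)
  {d : HSt V N → HAct V E} (hd : ∀ s, M.Enabled s (d s))
include hM hd

theorem IsHamiltonMDP.choosesEdge_nextVertex {v : V} (h : d (hv v) ≠ hτ) :
    ChoosesEdge d v (nextVertex d v) := by
  rcases hM.decision_vertex hd v with h' | ⟨v', hE, hdv⟩
  · exact absurd h' h
  · have hnext : nextVertex d v = v' := by simp [nextVertex, hdv]
    exact hnext ▸ ⟨hE, hdv⟩

theorem IsHamiltonMDP.exists_hamiltonianPath (hcard : Fintype.card V = N) (hN : 2 ≤ N)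
    (hgap : |M.reachLim d {hsa} hs0 - M.reachLim d {hsb} hs0| < (1 / 2) ^ N) :
    ∃ l : List V, l.length = N ∧ l.Nodup ∧ l.head? = some vinit ∧
      l.IsChain fun a b => (a, b) ∈ E := by
  rw [hM.reachLim_sb_s0 hd hN] at hgap
  set w : ℕ → V := fun j => (nextVertex d)^[j] vinit with hw
  have hstep (j : ℕ) (h : d (hv (w j)) ≠ hτ) : ChoosesEdge d (w j) (w (j + 1)) := by
    simpa only [hw, Function.iterate_succ_apply'] using hM.choosesEdge_nextVertex hd h
  have hstop : ∃ k, d (hv (w k)) = hτ := by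
    by_contra! h
    rw [hM.reachLim_sa_s0_of_forall hd hN rfl fun j => hstep j (h j), zero_sub, abs_neg,
      abs_of_pos (by positivity)] at hgap
    exact lt_irrefl _ hgap
  classical
  set k := Nat.find hstop
  have hk : d (hv (w k)) = hτ := Nat.find_spec hstop
  have hlt (j : ℕ) (hj : j < k) : d (hv (w j)) ≠ hτ := Nat.find_min hstop hj
  have hinj : Set.InjOn w (Set.Iic k) :=
    Function.injOn_iterate_Iic_of_first_hit (p := fun v => d (hv v) = hτ) hk hlt
  have hkN : k + 1 ≤ N := by
    have := Finset.card_le_card_of_injOn w (s := Finset.range (k + 1)) (t := Finset.univ)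
      (fun _ _ => Finset.mem_coe.2 (Finset.mem_univ _))
      (hinj.mono fun j hj => Nat.lt_succ_iff.1 (Finset.mem_range.1 hj))
    simpa [hcard] using this
  have hkN' : k + 1 = N := by
    by_contra hne
    rw [hM.reachLim_sa_s0_of_stop hd hN rfl (fun j hj => hstep j (hlt j hj)) hk] at hgap
    have := two_mul_half_pow_le (show k + 1 < N by omega)
    have hpos : (0 : ℝ) < (1 / 2) ^ N := by positivity
    rw [abs_of_pos (by linarith)] at hgap
    linarith
  refine ⟨(List.range N).map w, by simp, List.nodup_range.map_on ?_, ?_, ?_⟩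
  · intro i hi j hj
    exact hinj (by simp at hi ⊢; omega) (by simp at hj ⊢; omega)
  · rw [List.head?_map, List.head?_range, if_neg (by omega)]
    rfl
  · rw [List.isChain_map, ← hkN', List.isChain_range_succ]
    exact fun m hm => (hstep m (hlt m hm)).1

end Backward

theorem hamiltonian_path_iff_MD_scheduler_approx_equality_general
    {V : Type} [Fintype V] (N : ℕ) (hcard : Fintype.card V = N)
    (hV : 2 ≤ N) (E : Set (V × V)) (vinit : V)
    (M : MDP (HSt V N) (HAct V E)) (hM : IsHamiltonMDP N E vinit M)
    (ε : ℚ) (hε0 : 0 ≤ ε) (hεlt : (ε : ℝ) < 1 / 2 ^ (N + 1)) :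
    (∃ l : List V, l.length = N ∧ l.Nodup ∧ l.head? = some vinit ∧
        l.Chain' (fun a b => (a, b) ∈ E)) ↔
    (∃ σ : Scheduler M, σ.MD ∧
        |reachProb M σ hs0 {hsa} - reachProb M σ hs0 {hsb}| ≤ (ε : ℝ)) := by
  constructor
  · rintro ⟨l, hlen, hnd, hhd, hch⟩
    refine ⟨_, Scheduler.ofDecision_MD _ (hM.enabled_pathDecision hV l), ?_⟩
    rw [reachProb_ofDecision, reachProb_ofDecision,
      hM.reachLim_pathDecision hV hlen hnd hhd hch, sub_self, abs_zero]
    exact_mod_cast hε0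
  · rintro ⟨σ, hσ, hbound⟩
    obtain ⟨d, hd, rfl⟩ := hσ.exists_eq_ofDecision
    rw [reachProb_ofDecision, reachProb_ofDecision] at hbound
    have hεN : (1 : ℝ) / 2 ^ (N + 1) ≤ (1 / 2) ^ N := by
      rw [one_div_pow]
      exact one_div_le_one_div_of_le (by positivity) (pow_le_pow_right₀ (by norm_num) N.le_succ)
    exact hM.exists_hamiltonianPath hd hcard hV (hbound.trans_lt (hεlt.trans_le hεN))

theorem hamiltonian_path_iff_MD_scheduler_approx_equality
    {V : Type} [Fintype V] [DecidableEq V] (N : ℕ) (hcard : Fintype.card V = N)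
    (hV : 2 ≤ N) (E : Set (V × V)) (vinit : V)
    (M : MDP (HSt V N) (HAct V E)) (hM : IsHamiltonMDP N E vinit M)
    (ε : ℚ) (hε0 : 0 ≤ ε) (hεlt : (ε : ℝ) < 1 / 2 ^ (N + 1)) :
    (∃ l : List V, l.length = N ∧ l.Nodup ∧ l.head? = some vinit ∧
        l.Chain' (fun a b => (a, b) ∈ E)) ↔
    (∃ σ : Scheduler M, σ.MD ∧
        |reachProb M σ hs0 {hsa} - reachProb M σ hs0 {hsb}| ≤ (ε : ℝ)) :=
  hamiltonian_path_iff_MD_scheduler_approx_equality_general N hcard hV E vinit M hM ε hε0 hεlt
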